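/- If 𝔱 is a λ-term in normal form of type 0, 1, or 2, then every subterm of 𝔱 has type 0, 1, or 2. -/
import Mathlib


/-- The finite types: `0` is a finite type, and if `σ, τ` are finite types so is `σ → τ`. -/
inductive FType : Type
  | zero : FType
  | arrow : FType → FType → FType
deriving DecidableEq

/-- The standard types: `0` is standard, and if `σ` is standard then so is `σ → 0`. -/
inductive IsStd : FType → Prop
  | zero : IsStd FType.zero
  | arrow {σ : FType} : IsStd σ → IsStd (FType.arrow σ FType.zero)

/-- Type `1 = 0 → 0`. -/
def ty1 : FType := FType.arrow FType.zero FType.zero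

/-- Type `2 = 1 → 0`. -/
def ty2 : FType := FType.arrow ty1 FType.zero

/-- `L³`-terms, intrinsically typed: built from variables and parameter symbols of types
`0, 1, 2`, the constants `0, 1` of type `0`, and the operations `+`, `×` (of type `0×0→0`),
the application operators `·₀ : 1×0→0` and `·₁ : 2×1→0`, `* : 2×1→1` and `⌢ : 0×1→1`. -/
inductive LTerm : FType → Type
  | var0 (n : ℕ) : LTerm FType.zero
  | var1 (n : ℕ) : LTerm ty1
  | var2 (n : ℕ) : LTerm ty2
  | param0 (n : ℕ) : LTerm FType.zero
  | param1 (n : ℕ) : LTerm ty1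
  | param2 (n : ℕ) : LTerm ty2
  | czero : LTerm FType.zero
  | cone : LTerm FType.zero
  | add : LTerm FType.zero → LTerm FType.zero → LTerm FType.zero
  | mul : LTerm FType.zero → LTerm FType.zero → LTerm FType.zero
  | app0 : LTerm ty1 → LTerm FType.zero → LTerm FType.zero
  | app1 : LTerm ty2 → LTerm ty1 → LTerm FType.zero
  | star : LTerm ty2 → LTerm ty1 → LTerm ty1
  | cons : LTerm FType.zero → LTerm ty1 → LTerm ty1

/-- λ-terms (without the binder freshness side condition, which is recorded separately by
`LamWF`): every `L³`-term is a λ-term; λ-terms are closed under application; and `λx.(𝔱)`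
is a λ-term of type `ρ → σ` whenever `𝔱` is a λ-term of type `σ` and `x` is a variable of
type `ρ` (represented by its type `ρ` and an index `n : ℕ`). -/
inductive Lam : FType → Type
  | atom {σ : FType} : LTerm σ → Lam σ
  | app {σ τ : FType} : Lam (FType.arrow σ τ) → Lam σ → Lam τ
  | lam (ρ : FType) (n : ℕ) {τ : FType} : Lam τ → Lam (FType.arrow ρ τ)

/-- `lamOccurs ρ n t` says that the binder `λx` for the variable `x` of type `ρ` with index
`n` occurs somewhere in the λ-term `t` (i.e. `x` is a bound variable of `t`). -/
def lamOccurs (ρ : FType) (n : ℕ) : ∀ {σ : FType}, Lam σ → Prop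
  | _, Lam.atom _ => False
  | _, Lam.app t s => lamOccurs ρ n t ∨ lamOccurs ρ n s
  | _, Lam.lam ρ' m t => (ρ' = ρ ∧ m = n) ∨ lamOccurs ρ n t

/-- Well-formedness of a λ-term: at each abstraction `λx.(𝔱)`, the binder `λx` does not
already occur in `𝔱` (the side condition in the definition of λ-terms). -/
inductive LamWF : ∀ {σ : FType}, Lam σ → Prop
  | atom {σ : FType} (t : LTerm σ) : LamWF (Lam.atom t)
  | app {σ τ : FType} {t : Lam (FType.arrow σ τ)} {s : Lam σ} :
      LamWF t → LamWF s → LamWF (Lam.app t s)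
  | lam {ρ : FType} {n : ℕ} {τ : FType} {t : Lam τ} :
      LamWF t → ¬ lamOccurs ρ n t → LamWF (Lam.lam ρ n t)

/-- The subterm relation on `L³`-terms. -/
inductive LSub : ∀ {σ τ : FType}, LTerm σ → LTerm τ → Prop
  | refl {σ : FType} (t : LTerm σ) : LSub t t
  | addL {ρ : FType} {u : LTerm ρ} {a b : LTerm FType.zero} : LSub u a → LSub u (LTerm.add a b)
  | addR {ρ : FType} {u : LTerm ρ} {a b : LTerm FType.zero} : LSub u b → LSub u (LTerm.add a b)
  | mulL {ρ : FType} {u : LTerm ρ} {a b : LTerm FType.zero} : LSub u a → LSub u (LTerm.mul a b)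
  | mulR {ρ : FType} {u : LTerm ρ} {a b : LTerm FType.zero} : LSub u b → LSub u (LTerm.mul a b)
  | app0L {ρ : FType} {u : LTerm ρ} {f : LTerm ty1} {a : LTerm FType.zero} :
      LSub u f → LSub u (LTerm.app0 f a)
  | app0R {ρ : FType} {u : LTerm ρ} {f : LTerm ty1} {a : LTerm FType.zero} :
      LSub u a → LSub u (LTerm.app0 f a)
  | app1L {ρ : FType} {u : LTerm ρ} {f : LTerm ty2} {a : LTerm ty1} :
      LSub u f → LSub u (LTerm.app1 f a)
  | app1R {ρ : FType} {u : LTerm ρ} {f : LTerm ty2} {a : LTerm ty1} :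
      LSub u a → LSub u (LTerm.app1 f a)
  | starL {ρ : FType} {u : LTerm ρ} {f : LTerm ty2} {a : LTerm ty1} :
      LSub u f → LSub u (LTerm.star f a)
  | starR {ρ : FType} {u : LTerm ρ} {f : LTerm ty2} {a : LTerm ty1} :
      LSub u a → LSub u (LTerm.star f a)
  | consL {ρ : FType} {u : LTerm ρ} {k : LTerm FType.zero} {a : LTerm ty1} :
      LSub u k → LSub u (LTerm.cons k a)
  | consR {ρ : FType} {u : LTerm ρ} {k : LTerm FType.zero} {a : LTerm ty1} :
      LSub u a → LSub u (LTerm.cons k a)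

/-- The subterm relation on λ-terms (subterms of an `L³`-term, viewed as λ-terms, count as
subterms of the corresponding atomic λ-term). -/
inductive LamSub : ∀ {σ τ : FType}, Lam σ → Lam τ → Prop
  | refl {σ : FType} (t : Lam σ) : LamSub t t
  | atom {σ τ : FType} {u : LTerm σ} {t : LTerm τ} : LSub u t → LamSub (Lam.atom u) (Lam.atom t)
  | appL {ρ σ τ : FType} {u : Lam ρ} {t : Lam (FType.arrow σ τ)} {s : Lam σ} :
      LamSub u t → LamSub u (Lam.app t s)
  | appR {ρ σ τ : FType} {u : Lam ρ} {t : Lam (FType.arrow σ τ)} {s : Lam σ} :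
      LamSub u s → LamSub u (Lam.app t s)
  | lam {ρ' : FType} {n : ℕ} {ρ τ : FType} {u : Lam ρ} {t : Lam τ} :
      LamSub u t → LamSub u (Lam.lam ρ' n t)

/-- A λ-term is in normal form if it contains no subterm of the form `((λx.𝔰)(𝔲))`. -/
def NormalForm {σ : FType} (t : Lam σ) : Prop :=
  ∀ (ρ τ : FType) (n : ℕ) (s : Lam τ) (u : Lam ρ), ¬ LamSub (Lam.app (Lam.lam ρ n s) u) t

theorem lterm_low : ∀ {σ : FType} (_ : LTerm σ), σ = FType.zero ∨ σ = ty1 ∨ σ = ty2 := by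
  intro σ t
  cases t <;> first
    | exact Or.inl rfl | exact Or.inr (Or.inl rfl) | exact Or.inr (Or.inr rfl)

theorem LSub.trans' {ρ σ τ : FType} {a : LTerm ρ} {b : LTerm σ} {c : LTerm τ}
    (h1 : LSub a b) (h2 : LSub b c) : LSub a c := by
  induction h2 with
  | refl => exact h1
  | addL _ ih => exact LSub.addL (ih h1)
  | addR _ ih => exact LSub.addR (ih h1)
  | mulL _ ih => exact LSub.mulL (ih h1)
  | mulR _ ih => exact LSub.mulR (ih h1)
  | app0L _ ih => exact LSub.app0L (ih h1)
  | app0R _ ih => exact LSub.app0R (ih h1)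
  | app1L _ ih => exact LSub.app1L (ih h1)
  | app1R _ ih => exact LSub.app1R (ih h1)
  | starL _ ih => exact LSub.starL (ih h1)
  | starR _ ih => exact LSub.starR (ih h1)
  | consL _ ih => exact LSub.consL (ih h1)
  | consR _ ih => exact LSub.consR (ih h1)

theorem LamSub.trans' {ρ σ τ : FType} {a : Lam ρ} {b : Lam σ} {c : Lam τ}
    (h1 : LamSub a b) (h2 : LamSub b c) : LamSub a c := by
  induction h2 with
  | refl => exact h1
  | atom h =>
    cases h1 with
    | refl => exact LamSub.atom h
    | atom h' => exact LamSub.atom (h'.trans' h)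
  | appL _ ih => exact LamSub.appL (ih h1)
  | appR _ ih => exact LamSub.appR (ih h1)
  | lam _ ih => exact LamSub.lam (ih h1)

theorem NormalForm.sub {σ τ : FType} {t : Lam σ} {s : Lam τ} (h : NormalForm t)
    (hs : LamSub s t) : NormalForm s :=
  fun ρ τ' n s' u hsub => h ρ τ' n s' u (hsub.trans' hs)

theorem app_head_low : ∀ {σ τ : FType} (f : Lam (FType.arrow σ τ)) (a : Lam σ),
    NormalForm (Lam.app f a) → FType.arrow σ τ = ty1 ∨ FType.arrow σ τ = ty2 := by
  intro σ τ f a hnf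
  match f with
  | Lam.atom u =>
    rcases lterm_low u with h | h | h
    · exact absurd h (by simp)
    · exact Or.inl h
    · exact Or.inr h
  | Lam.app f' a' =>
    have hsub : LamSub (Lam.app f' a') (Lam.app (Lam.app f' a') a) :=
      LamSub.appL (LamSub.refl _)
    have h := app_head_low f' a' (hnf.sub hsub)
    rcases h with h | h <;> simp [ty1, ty2] at h
  | Lam.lam ρ n b =>
    exact absurd (LamSub.refl _) (hnf _ _ n b a)

theorem subterm_low_aux : ∀ {σ τ : FType} (t : Lam σ), NormalForm t →
    (σ = FType.zero ∨ σ = ty1 ∨ σ = ty2) → ∀ (s : Lam τ), LamSub s t →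
    τ = FType.zero ∨ τ = ty1 ∨ τ = ty2 := by
  intro σ τ t hnf hty s hsub
  match t with
  | Lam.atom u =>
    cases hsub with
    | refl => exact hty
    | atom h => exact lterm_low (by assumption)
  | Lam.app f a =>
    cases hsub with
    | refl => exact hty
    | appL h =>
      rcases app_head_low f a hnf with hf | hf
      · exact subterm_low_aux f (hnf.sub (LamSub.appL (LamSub.refl _))) (Or.inr (Or.inl hf)) s h
      · exact subterm_low_aux f (hnf.sub (LamSub.appL (LamSub.refl _))) (Or.inr (Or.inr hf)) s h
    | appR h =>
      rcases app_head_low f a hnf with hf | hf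
      · injection hf with h1 h2
        exact subterm_low_aux a (hnf.sub (LamSub.appR (LamSub.refl _))) (Or.inl h1) s h
      · injection hf with h1 h2
        exact subterm_low_aux a (hnf.sub (LamSub.appR (LamSub.refl _))) (Or.inr (Or.inl h1)) s h
  | Lam.lam ρ n b =>
    cases hsub with
    | refl => exact hty
    | lam h =>
      have hb : NormalForm b := hnf.sub (LamSub.lam (LamSub.refl _))
      rcases hty with h0 | h1 | h2
      · exact absurd h0 (by simp)
      · injection h1 with _ hb0
        exact subterm_low_aux b hb (Or.inl hb0) s h
      · injection h2 with _ hb0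
        exact subterm_low_aux b hb (Or.inl hb0) s h

/-- If `𝔱` is a λ-term in normal form of type `0`, `1`, or `2`, then every subterm of `𝔱`
has type `0`, `1`, or `2`. -/
theorem subterm_low_type {σ τ : FType} (t : Lam σ) (hwf : LamWF t) (hnf : NormalForm t)
    (hty : σ = FType.zero ∨ σ = ty1 ∨ σ = ty2) (s : Lam τ) (hsub : LamSub s t) :
    τ = FType.zero ∨ τ = ty1 ∨ τ = ty2 :=
  subterm_low_aux t hnf hty s hsub
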